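/- Let $d \ge 2$, let $e_1, e_2 \in \mathbb{R}^d$ be orthonormal, let $\rho > 0$, $\tau > 0$, $\delta \ge 0$ with $\tau/3 > 1 + \rho \delta$, and consider $n \ge 1$ datapoints $x_1, \dots, x_n \in \mathbb{R}^d$ where each $x_i$ is of one of the forms $x_i = e_1 - q_i \tau e_2 + \rho \xi_i$ (class 1), $x_i = -e_1 - q_i \tau e_2 + \rho \xi_i$ (class 2), or $x_i = e_2 + \rho \xi_i$ (class 3), with $q_i \in \{0,1\}$ and $\xi_i \in \mathbb{R}^d$. Set $M = \frac{1}{n} \sum_{i=1}^n x_i x_i^{\top}$. Suppose that at least $n/3$ of the datapoints are class-1 or class-2 points with $q_i = 1$, and that $\| \frac{1}{n} \sum_{i=1}^n \xi_i \|_2 \le \delta$. Then $e_2^{\top} M e_2 \ge \big( \tau/3 - 1 - \rho \delta \big)^2$. -/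
import Mathlib

open Matrix
open scoped Classical

lemma dot_vmv {d : ℕ} (u v w z : Fin d → ℝ) :
    w ⬝ᵥ (vecMulVec u v).mulVec z = (w ⬝ᵥ u) * (v ⬝ᵥ z) := by
  simp only [dotProduct, mulVec, vecMulVec_apply, Finset.sum_mul, Finset.mul_sum]
  rw [Finset.sum_comm]
  refine Finset.sum_congr rfl fun i _ => Finset.sum_congr rfl fun j _ => by ring

lemma quadform (d n : ℕ) (x : Fin n → Fin d → ℝ) (e₂ : Fin d → ℝ) (c : ℝ)
    (M : Matrix (Fin d) (Fin d) ℝ)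
    (hM : M = c • ∑ i, vecMulVec (x i) (x i)) :
    e₂ ⬝ᵥ M.mulVec e₂ = c * ∑ i, (x i ⬝ᵥ e₂)^2 := by
  subst hM
  rw [Matrix.smul_mulVec, dotProduct_smul, smul_eq_mul]
  congr 1
  have h : (∑ i, vecMulVec (x i) (x i)) *ᵥ e₂ = ∑ i, (vecMulVec (x i) (x i)) *ᵥ e₂ := by
    ext j
    simp only [mulVec, dotProduct, Matrix.sum_apply, Finset.sum_apply, Finset.sum_mul]
    exact Finset.sum_comm
  have h2 : e₂ ⬝ᵥ ∑ i, (vecMulVec (x i) (x i)) *ᵥ e₂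
      = ∑ i, e₂ ⬝ᵥ ((vecMulVec (x i) (x i)) *ᵥ e₂) := by
    simp only [dotProduct, Finset.sum_apply, Finset.mul_sum]
    exact Finset.sum_comm
  rw [h, h2]
  refine Finset.sum_congr rfl fun i _ => ?_
  rw [dot_vmv, dotProduct_comm, sq]

lemma sum_dot {d n : ℕ} (ξ : Fin n → Fin d → ℝ) (e₂ : Fin d → ℝ) :
    (∑ i, ξ i) ⬝ᵥ e₂ = ∑ i, ξ i ⬝ᵥ e₂ := by
  simp only [dotProduct, Finset.sum_apply, Finset.sum_mul]
  exact Finset.sum_comm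

lemma fin3_cases : ∀ j : Fin 3, j = 0 ∨ j = 1 ∨ j = 2 := by decide

noncomputable def bfun {n : ℕ} (y : Fin n → Fin 3) (q : Fin n → ℝ) (τ : ℝ) (i : Fin n) : ℝ :=
  if (y i = 0 ∨ y i = 1) ∧ q i = 1 then -τ else if y i = 2 then 1 else 0

set_option maxHeartbeats 1000000 in
/-- Deterministic version of part (1) of Lemma 3: in the three-class toy data model,
if at least a third of the data carries the `-τ e₂` component and the average noise
vector is small, then the empirical second-moment matrix `M` of the data has large
Rayleigh quotient in the direction `e₂`. -/
theorem stmt_10 (d n : ℕ) (hd : 2 ≤ d) (hn : 1 ≤ n)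
    (e₁ e₂ : Fin d → ℝ) (he₁ : e₁ ⬝ᵥ e₁ = 1) (he₂ : e₂ ⬝ᵥ e₂ = 1) (he₁₂ : e₁ ⬝ᵥ e₂ = 0)
    (ρ τ δ : ℝ) (hρ : 0 < ρ) (hτ : 0 < τ) (hδ : 0 ≤ δ) (hgap : 1 + ρ * δ < τ / 3)
    (x ξ : Fin n → Fin d → ℝ) (q : Fin n → ℝ) (y : Fin n → Fin 3)
    (hq : ∀ i, q i = 0 ∨ q i = 1)
    (hx1 : ∀ i, y i = 0 → x i = e₁ - (q i * τ) • e₂ + ρ • ξ i)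
    (hx2 : ∀ i, y i = 1 → x i = -e₁ - (q i * τ) • e₂ + ρ • ξ i)
    (hx3 : ∀ i, y i = 2 → x i = e₂ + ρ • ξ i)
    (M : Matrix (Fin d) (Fin d) ℝ)
    (hM : M = (n : ℝ)⁻¹ • ∑ i, vecMulVec (x i) (x i))
    (hfrac : (n : ℝ) / 3 ≤
      ((Finset.univ.filter fun i : Fin n => (y i = 0 ∨ y i = 1) ∧ q i = 1).card : ℝ))
    (hnoise : Real.sqrt
      (((n : ℝ)⁻¹ • ∑ i, ξ i) ⬝ᵥ ((n : ℝ)⁻¹ • ∑ i, ξ i)) ≤ δ) :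
    e₂ ⬝ᵥ M.mulVec e₂ ≥ (τ / 3 - 1 - ρ * δ) ^ 2 := by
  have hn0 : (0:ℝ) < n := by exact_mod_cast hn
  -- pointwise decomposition
  have ha : ∀ i, x i ⬝ᵥ e₂ = bfun y q τ i + ρ * (ξ i ⬝ᵥ e₂) := by
    intro i
    have hxe : ∀ (h : y i = 0 ∨ y i = 1),
        x i ⬝ᵥ e₂ = -(q i * τ) + ρ * (ξ i ⬝ᵥ e₂) := by
      intro h
      rcases h with h | h
      · simp [hx1 i h, add_dotProduct, sub_dotProduct, smul_dotProduct,
          neg_dotProduct, he₁₂, he₂]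
      · simp [hx2 i h, add_dotProduct, sub_dotProduct, smul_dotProduct,
          neg_dotProduct, he₁₂, he₂]
    rcases fin3_cases (y i) with h | h | h
    · rcases hq i with hq0 | hq1
      · have hnp : ¬ ((y i = 0 ∨ y i = 1) ∧ q i = 1) := by
          rintro ⟨-, h1⟩; rw [hq0] at h1; norm_num at h1
        have h2 : ¬ y i = 2 := by rw [h]; decide
        have hb : bfun y q τ i = 0 := by
          rw [bfun, if_neg hnp, if_neg h2]
        rw [hb, hxe (Or.inl h), hq0]; ring
      · have hb : bfun y q τ i = -τ := by
          simp only [bfun, if_pos (⟨Or.inl h, hq1⟩ :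
            (y i = 0 ∨ y i = 1) ∧ q i = 1)]
        rw [hb, hxe (Or.inl h), hq1]; ring
    · rcases hq i with hq0 | hq1
      · have hnp : ¬ ((y i = 0 ∨ y i = 1) ∧ q i = 1) := by
          rintro ⟨-, h1⟩; rw [hq0] at h1; norm_num at h1
        have h2 : ¬ y i = 2 := by rw [h]; decide
        have hb : bfun y q τ i = 0 := by
          rw [bfun, if_neg hnp, if_neg h2]
        rw [hb, hxe (Or.inr h), hq0]; ring
      · have hb : bfun y q τ i = -τ := by
          simp only [bfun, if_pos (⟨Or.inr h, hq1⟩ :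
            (y i = 0 ∨ y i = 1) ∧ q i = 1)]
        rw [hb, hxe (Or.inr h), hq1]; ring
    · have hnp : ¬ ((y i = 0 ∨ y i = 1) ∧ q i = 1) := by
        rintro ⟨h' | h', -⟩ <;> rw [h] at h' <;> exact absurd h' (by decide)
      have hb : bfun y q τ i = 1 := by
        rw [bfun, if_neg hnp, if_pos h]
      rw [hb, hx3 i h]
      simp [add_dotProduct, smul_dotProduct, he₂]
  have hk : (n:ℝ)/3 ≤
      ((Finset.univ.filter fun i : Fin n => (y i = 0 ∨ y i = 1) ∧ q i = 1).card : ℝ) := hfrac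
  -- bound on ∑ bfun
  have hsumb : ∑ i, bfun y q τ i ≤
      -τ * ((Finset.univ.filter fun i : Fin n => (y i = 0 ∨ y i = 1) ∧ q i = 1).card : ℝ)
        + n := by
    rw [← Finset.sum_filter_add_sum_filter_not Finset.univ
      (fun i => (y i = 0 ∨ y i = 1) ∧ q i = 1) (bfun y q τ)]
    have h1 : ∑ i ∈ Finset.univ.filter (fun i => (y i = 0 ∨ y i = 1) ∧ q i = 1),
        bfun y q τ i =
        -τ * ((Finset.univ.filter fun i : Fin n =>
          (y i = 0 ∨ y i = 1) ∧ q i = 1).card : ℝ) := by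
      rw [Finset.sum_congr rfl (fun i hi => by
        have hp : (y i = 0 ∨ y i = 1) ∧ q i = 1 := (Finset.mem_filter.mp hi).2
        show bfun y q τ i = -τ
        simp only [bfun, if_pos hp])]
      rw [Finset.sum_const, nsmul_eq_mul]; ring
    have h2 : ∑ i ∈ Finset.univ.filter (fun i => ¬ ((y i = 0 ∨ y i = 1) ∧ q i = 1)),
        bfun y q τ i ≤ n := by
      calc ∑ i ∈ Finset.univ.filter (fun i => ¬ ((y i = 0 ∨ y i = 1) ∧ q i = 1)),
            bfun y q τ i
          ≤ ∑ _i ∈ Finset.univ.filter (fun i => ¬ ((y i = 0 ∨ y i = 1) ∧ q i = 1)),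
            (1:ℝ) := by
            refine Finset.sum_le_sum fun i hi => ?_
            have hnp := (Finset.mem_filter.mp hi).2
            simp only [bfun, if_neg hnp]
            split <;> norm_num
        _ = ((Finset.univ.filter
              (fun i => ¬ ((y i = 0 ∨ y i = 1) ∧ q i = 1))).card : ℝ) := by
            rw [Finset.sum_const, nsmul_eq_mul, mul_one]
        _ ≤ n := by
            have := Finset.card_filter_le Finset.univ
              (fun i : Fin n => ¬ ((y i = 0 ∨ y i = 1) ∧ q i = 1))
            rw [Finset.card_univ, Fintype.card_fin] at this
            exact_mod_cast this
    linarith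
  -- noise bound
  have hnb : (∑ i, ξ i) ⬝ᵥ e₂ ≤ n * δ := by
    have hww : 0 ≤ ((n : ℝ)⁻¹ • ∑ i, ξ i) ⬝ᵥ ((n : ℝ)⁻¹ • ∑ i, ξ i) := by
      simp only [dotProduct]
      exact Finset.sum_nonneg fun i _ => mul_self_nonneg _
    have h1 : ((n : ℝ)⁻¹ • ∑ i, ξ i) ⬝ᵥ ((n : ℝ)⁻¹ • ∑ i, ξ i) ≤ δ^2 := by
      have h := Real.sq_sqrt hww
      nlinarith [Real.sqrt_nonneg (((n : ℝ)⁻¹ • ∑ i, ξ i) ⬝ᵥ ((n : ℝ)⁻¹ • ∑ i, ξ i))]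
    have hcs : (((n : ℝ)⁻¹ • ∑ i, ξ i) ⬝ᵥ e₂)^2
        ≤ (((n : ℝ)⁻¹ • ∑ i, ξ i) ⬝ᵥ ((n : ℝ)⁻¹ • ∑ i, ξ i)) * (e₂ ⬝ᵥ e₂) := by
      have h := Finset.sum_mul_sq_le_sq_mul_sq Finset.univ ((n : ℝ)⁻¹ • ∑ i, ξ i) e₂
      simp only [dotProduct]
      calc (∑ i, ((n : ℝ)⁻¹ • ∑ i, ξ i) i * e₂ i)^2
          ≤ (∑ i, (((n : ℝ)⁻¹ • ∑ i, ξ i) i)^2) * (∑ i, (e₂ i)^2) := h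
        _ = (∑ i, ((n : ℝ)⁻¹ • ∑ i, ξ i) i * ((n : ℝ)⁻¹ • ∑ i, ξ i) i)
            * (∑ i, e₂ i * e₂ i) := by simp [sq]
    rw [he₂, mul_one] at hcs
    have h2 : ((n : ℝ)⁻¹ • ∑ i, ξ i) ⬝ᵥ e₂ ≤ δ := by nlinarith
    have h3 : ((n : ℝ)⁻¹ • ∑ i, ξ i) ⬝ᵥ e₂ = (n:ℝ)⁻¹ * ((∑ i, ξ i) ⬝ᵥ e₂) := by
      rw [smul_dotProduct, smul_eq_mul]
    rw [h3] at h2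
    have h4 := mul_le_mul_of_nonneg_left h2 (le_of_lt hn0)
    calc (∑ i, ξ i) ⬝ᵥ e₂ = (n:ℝ) * ((n:ℝ)⁻¹ * ((∑ i, ξ i) ⬝ᵥ e₂)) := by
          field_simp
      _ ≤ n * δ := h4
  -- bound ∑ (x i ⬝ᵥ e₂)
  have hsuma : ∑ i, x i ⬝ᵥ e₂ ≤ -(n * (τ/3 - 1 - ρ * δ)) := by
    have h1 : ∑ i, x i ⬝ᵥ e₂ = ∑ i, bfun y q τ i + ρ * ((∑ i, ξ i) ⬝ᵥ e₂) := by
      rw [sum_dot, Finset.mul_sum, ← Finset.sum_add_distrib]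
      exact Finset.sum_congr rfl fun i _ => ha i
    rw [h1]
    have h2 : ρ * ((∑ i, ξ i) ⬝ᵥ e₂) ≤ ρ * (n * δ) :=
      mul_le_mul_of_nonneg_left hnb (le_of_lt hρ)
    nlinarith
  -- conclude
  rw [quadform d n x e₂ _ M hM]
  have hcheb : (∑ i, x i ⬝ᵥ e₂)^2 ≤ (n:ℝ) * ∑ i, (x i ⬝ᵥ e₂)^2 := by
    have h := sq_sum_le_card_mul_sum_sq (s := Finset.univ) (f := fun i => x i ⬝ᵥ e₂)
    simpa using h
  have hc : 0 < τ/3 - 1 - ρ * δ := by linarith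
  have h0 : 0 ≤ (n:ℝ) * (τ/3 - 1 - ρ * δ) := by positivity
  have h1 : (n:ℝ) * (τ/3 - 1 - ρ * δ) ≤ -(∑ i, x i ⬝ᵥ e₂) := by linarith
  have hsq : (n:ℝ)^2 * (τ/3 - 1 - ρ * δ)^2 ≤ (∑ i, x i ⬝ᵥ e₂)^2 := by
    nlinarith [mul_le_mul h1 h1 h0 (le_trans h0 h1)]
  have ht : (n:ℝ) * (τ/3 - 1 - ρ * δ)^2 ≤ ∑ i, (x i ⬝ᵥ e₂)^2 := by nlinarith
  rw [ge_iff_le, ← sub_nonneg]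
  have heq : (n:ℝ)⁻¹ * (∑ i, (x i ⬝ᵥ e₂)^2) - (τ/3 - 1 - ρ * δ)^2
      = (n:ℝ)⁻¹ * ((∑ i, (x i ⬝ᵥ e₂)^2) - n * (τ/3 - 1 - ρ * δ)^2) := by
    field_simp
  rw [heq]
  exact mul_nonneg (inv_nonneg.mpr (le_of_lt hn0)) (by linarith)
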